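/- arXiv:1803.07754 — 2 statements merged into one kernel-verified Lean document; each statement's English description precedes it below -/
import Mathlib

section
/- Let X, A, Y be C^r manifolds (r ≥ 1), Z a C^r submanifold of Y, U ⊆ X × A open, F : U → Y a C¹ map, and suppose F is transverse to Z. If a ∈ A is a regular value of the restriction π₂|_{F⁻¹(Z)} : F⁻¹(Z) → A (where F⁻¹(Z) is a C^r submanifold of U), then the slice map F_a is transverse to Z. -/
open Set Submodule Module MeasureTheory Function Classical

noncomputable section

variable {Y : Type*} [NormedAddCommGroup Y] [NormedSpace ℝ Y]

/-- The tangent space of a subset `Z` at a point `y`, as the span of the tangent cone. -/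
def tangentAt (Z : Set Y) (y : Y) : Submodule ℝ Y :=
  Submodule.span ℝ (tangentConeAt ℝ Z y)

/-- `Z` is an embedded `C^r` submanifold of dimension `q`: locally the regular zero set of a
`C^r` submersion with values in `ℝ^{dim Y - q}`. -/
def IsSubmanifold (r : ℕ∞) (q : ℕ) (Z : Set Y) : Prop :=
  ∀ z ∈ Z, ∃ s : Set Y, IsOpen s ∧ z ∈ s ∧
    ∃ f : Y → (Fin (finrank ℝ Y - q) → ℝ), ContDiffOn ℝ r f s ∧
      Z ∩ s = {y | y ∈ s ∧ f y = 0} ∧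
      ∀ y ∈ Z ∩ s, Surjective (fderivWithin ℝ f s y)

variable {X : Type*} [NormedAddCommGroup X] [NormedSpace ℝ X]

/-- The transversality defect `δ(f, x, Z)` of a map `f`, defined on `s`, at `x`. -/
def delta (f : X → Y) (s : Set X) (x : X) (Z : Set Y) : ℕ :=
  if f x ∈ Z then
    finrank ℝ Y - finrank ℝ ↥(LinearMap.range (fderivWithin ℝ f s x : X →ₗ[ℝ] Y) ⊔ tangentAt Z (f x))
  else 0

/-- `δ(f, Z)`, the supremum of the defects. -/
def deltaSup (f : X → Y) (s : Set X) (Z : Set Y) : ℕ :=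
  sSup {n | ∃ x ∈ s, n = delta f s x Z}

/-- `f`, defined on `s`, is transverse to `Z`. -/
def Transverse (f : X → Y) (s : Set X) (Z : Set Y) : Prop :=
  ∀ x ∈ s, f x ∈ Z → LinearMap.range (fderivWithin ℝ f s x : X →ₗ[ℝ] Y) ⊔ tangentAt Z (f x) = ⊤

end

/-! At `p = (x, a)` with `F p ∈ Z`, regularity of `a` says that `T_p F⁻¹(Z)` together with
`X × 0 = ker π₂` spans `X × A`. Since `dF_p` carries `T_p F⁻¹(Z)` into `T_{F p} Z`, the image of
`dF_p` lies in `im d(F_a)_x + T_{F p} Z`, so transversality of `F` passes to `F_a`. -/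

theorem LinearMap.range_comp_inl_sup_eq_top {R E A M : Type*} [Ring R]
    [AddCommGroup E] [Module R E] [AddCommGroup A] [Module R A] [AddCommGroup M] [Module R M]
    (L : E × A →ₗ[R] M) {T : Submodule R (E × A)} {W : Submodule R M}
    (hT : T.map (LinearMap.snd R E A) = ⊤) (hTW : T.map L ≤ W)
    (hL : LinearMap.range L ⊔ W = ⊤) :
    LinearMap.range (L ∘ₗ LinearMap.inl R E A) ⊔ W = ⊤ := by
  have hsplit : LinearMap.range (LinearMap.inl R E A) ⊔ T = ⊤ := by
    rwa [LinearMap.map_eq_top_iff Submodule.range_snd, ← LinearMap.range_inl,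
      sup_comm] at hT
  have hrange : LinearMap.range L ≤ LinearMap.range (L ∘ₗ LinearMap.inl R E A) ⊔ W := by
    rw [LinearMap.range_eq_map, ← hsplit, Submodule.map_sup, LinearMap.range_comp]
    exact sup_le_sup_left hTW _
  rw [eq_top_iff, ← hL]
  exact sup_le hrange le_sup_right

theorem HasFDerivWithinAt.map_tangentAt_le {E F : Type*} [NormedAddCommGroup E] [NormedSpace ℝ E]
    [NormedAddCommGroup F] [NormedSpace ℝ F] {f : E → F} {f' : E →L[ℝ] F} {s : Set E}
    {x : E} {Z : Set F} (hf : HasFDerivWithinAt f f' s x) (hsZ : MapsTo f s Z) :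
    (tangentAt s x).map (f' : E →ₗ[ℝ] F) ≤ tangentAt Z (f x) := by
  rw [tangentAt, Submodule.map_span]
  refine Submodule.span_mono ?_
  rintro _ ⟨v, hv, rfl⟩
  exact tangentConeAt_mono hsZ.image_subset (hf.mapsTo_tangent_cone hv)

theorem stmt6_general {X A Y : Type*} [NormedAddCommGroup X] [NormedSpace ℝ X]
    [NormedAddCommGroup A] [NormedSpace ℝ A]
    [NormedAddCommGroup Y] [NormedSpace ℝ Y]
    (Z : Set Y)
    (U : Set (X × A)) (hU : IsOpen U) (F : X × A → Y) (hF : ContDiffOn ℝ 1 F U)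
    (hT : Transverse F U Z) (a : A)
    (hreg : ∀ p ∈ {p | p ∈ U ∧ F p ∈ Z}, p.2 = a →
      Submodule.map (LinearMap.snd ℝ X A) (tangentAt {p | p ∈ U ∧ F p ∈ Z} p) = ⊤) :
    Transverse (fun x => F (x, a)) {x | (x, a) ∈ U} Z := by
  intro x hx hxZ
  have hdF : HasFDerivAt F (fderiv ℝ F (x, a)) (x, a) :=
    ((hF.contDiffAt (hU.mem_nhds hx)).differentiableAt one_ne_zero).hasFDerivAt
  have hslice : fderivWithin ℝ (fun x => F (x, a)) {x | (x, a) ∈ U} x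
      = (fderiv ℝ F (x, a)).comp (ContinuousLinearMap.inl ℝ X A) := by
    rw [fderivWithin_of_isOpen (s := {x | (x, a) ∈ U}) (hU.preimage (.prodMk_left a)) hx]
    exact (hdF.comp x (hasFDerivAt_prodMk_left x a)).fderiv
  have hTx := hT (x, a) hx hxZ
  rw [fderivWithin_of_isOpen hU hx] at hTx
  rw [hslice]
  exact LinearMap.range_comp_inl_sup_eq_top _ (hreg (x, a) ⟨hx, hxZ⟩ rfl)
    (hdF.hasFDerivWithinAt.map_tangentAt_le fun _ hp => hp.2) hTx

/-- If `F` is transverse to `Z` and `a` is a regular value of the projection restricted to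
`F⁻¹(Z)`, then the slice map `F_a` is transverse to `Z`. -/
theorem stmt6 {X A Y : Type*} [NormedAddCommGroup X] [NormedSpace ℝ X] [FiniteDimensional ℝ X]
    [NormedAddCommGroup A] [NormedSpace ℝ A] [FiniteDimensional ℝ A]
    [NormedAddCommGroup Y] [NormedSpace ℝ Y] [FiniteDimensional ℝ Y]
    (r : ℕ∞) (hr : 1 ≤ r) (q : ℕ) (Z : Set Y) (hZ : IsSubmanifold r q Z)
    (U : Set (X × A)) (hU : IsOpen U) (F : X × A → Y) (hF : ContDiffOn ℝ 1 F U)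
    (hT : Transverse F U Z) (a : A)
    (hreg : ∀ p ∈ {p | p ∈ U ∧ F p ∈ Z}, p.2 = a →
      Submodule.map (LinearMap.snd ℝ X A) (tangentAt {p | p ∈ U ∧ F p ∈ Z} p) = ⊤) :
    Transverse (fun x => F (x, a)) {x | (x, a) ∈ U} Z :=
  stmt6_general Z U hU F hF hT a hreg
end

section
/- Let F : ℝ × ℝ → ℝ³ be F(x,a) = (x, a, 0), and Z = {(x,0,0) : 0 < x < 1} ⊆ ℝ³. Then: (i) δ(F, (x,a), Z) = 1 and δ(F_a, x, Z) = 2 for all (x,a) ∈ (0,1) × {0}, and both are 0 elsewhere; (ii) W(F,Z) = ∅; (iii) the set Σ = {(x,a) : δ(F, (x,a), Z) = δ(F, Z)} equals (0,1) × {0} and is not closed in ℝ², even though δ(F_a,x,Z) = 0 or δ(F,(x,a),Z) < δ(F_a,x,Z) everywhere and δ(F,Z) = 1 > 0. -/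
open Set Submodule Module MeasureTheory Function Classical

/-! Near a point of the segment, `Z` is an open piece of the first axis, so its tangent space is
that axis. Both `F` and its slices `F_a` have injective derivatives whose images contain the axis,
so the defect is the codimension of the image: `3 - 2 = 1` for `F` and `3 - 1 = 2` for `F_a`.
Off the segment both defects vanish, so `Σ` is the segment `(0,1) × {0}`, whose closure
contains `(0,0)`. -/

open Topology

section TangentSpace

variable {E : Type*} [NormedAddCommGroup E] [NormedSpace ℝ E]

theorem tangentConeAt_submodule {p : Submodule ℝ E} (hp : IsClosed (p : Set E)) {x : E}
    (hx : x ∈ p) : tangentConeAt ℝ (p : Set E) x = p := by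
  ext v
  constructor
  · intro hv
    obtain ⟨_, _, _, _, _, -, hd, hcd⟩ := exists_fun_of_mem_tangentConeAt hv
    refine hp.mem_of_tendsto hcd (hd.mono fun n hn => p.smul_mem _ ?_)
    simpa using p.sub_mem hn hx
  · intro hv
    simpa using mem_tangentConeAt_of_segment_subset
      (p.convex.segment_subset hx (p.add_mem hx hv))

theorem tangentAt_submodule_inter {p : Submodule ℝ E} (hp : IsClosed (p : Set E)) {U : Set E}
    {x : E} (hx : x ∈ p) (hU : U ∈ 𝓝 x) : tangentAt ((p : Set E) ∩ U) x = p := by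
  rw [tangentAt, tangentConeAt_inter_nhds hU, tangentConeAt_submodule hp hx, Submodule.span_eq]

end TangentSpace

section Defect

variable {X Y : Type*} [NormedAddCommGroup X] [NormedSpace ℝ X] [NormedAddCommGroup Y]
  [NormedSpace ℝ Y] {f : X → Y} {s : Set X} {x : X} {Z : Set Y}

theorem delta_eq_zero_of_notMem (hx : f x ∉ Z) : delta f s x Z = 0 := if_neg hx

theorem delta_eq_finrank_sub_of_injective [FiniteDimensional ℝ X] (hx : f x ∈ Z)
    (hinj : Injective (fderivWithin ℝ f s x))
    (hT : tangentAt Z (f x) ≤ LinearMap.range (fderivWithin ℝ f s x : X →ₗ[ℝ] Y)) :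
    delta f s x Z = finrank ℝ Y - finrank ℝ X := by
  rw [delta, if_pos hx, sup_eq_left.2 hT, LinearMap.finrank_range_of_inj hinj]

end Defect

theorem not_isClosed_Ioo_prod {α β : Type*} [LinearOrder α] [TopologicalSpace α]
    [OrderTopology α] [DenselyOrdered α] [TopologicalSpace β] {a b : α} (hab : a < b)
    {t : Set β} (ht : t.Nonempty) : ¬ IsClosed (Ioo a b ×ˢ t) := by
  obtain ⟨y, hy⟩ := ht
  intro h
  have : (a, y) ∈ closure (Ioo a b ×ˢ t) := by
    rw [closure_prod_eq, closure_Ioo hab.ne]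
    exact ⟨left_mem_Icc.2 hab.le, subset_closure hy⟩
  rw [h.closure_eq] at this
  exact lt_irrefl a this.1.1

namespace BruceKirk

def F : ℝ × ℝ → (Fin 3 → ℝ) := fun p => ![p.1, p.2, 0]

def Z : Set (Fin 3 → ℝ) := {y | 0 < y 0 ∧ y 0 < 1 ∧ y 1 = 0 ∧ y 2 = 0}

def axis : Submodule ℝ (Fin 3 → ℝ) :=
  LinearMap.ker (LinearMap.proj 1) ⊓ LinearMap.ker (LinearMap.proj 2)

theorem mem_axis {v : Fin 3 → ℝ} : v ∈ axis ↔ v 1 = 0 ∧ v 2 = 0 := by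
  simp [axis]

theorem Z_eq_axis_inter : Z = (axis : Set (Fin 3 → ℝ)) ∩ {y | 0 < y 0 ∧ y 0 < 1} := by
  ext y
  simp only [Z, mem_ofPred_eq, mem_inter_iff, SetLike.mem_coe, mem_axis]
  tauto

theorem tangentAt_Z {y : Fin 3 → ℝ} (hy : y ∈ Z) : tangentAt Z y = axis := by
  have hU : IsOpen {y : Fin 3 → ℝ | 0 < y 0 ∧ y 0 < 1} :=
    (isOpen_lt continuous_const (continuous_apply 0)).inter
      (isOpen_lt (continuous_apply 0) continuous_const)
  rw [Z_eq_axis_inter] at hy ⊢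
  exact tangentAt_submodule_inter axis.closed_of_finiteDimensional hy.1 (hU.mem_nhds hy.2)

def L : (ℝ × ℝ) →L[ℝ] (Fin 3 → ℝ) := .pi ![.fst ℝ ℝ ℝ, .snd ℝ ℝ ℝ, 0]

theorem coe_L : ⇑L = F := by
  funext p i
  fin_cases i <;> simp [L, F]

theorem L_injective : Injective L := by
  intro p q h
  have h0 := congrFun h 0
  have h1 := congrFun h 1
  simp only [coe_L, F] at h0 h1
  exact Prod.ext (by simpa using h0) (by simpa using h1)

theorem axis_le_range :
    axis ≤ LinearMap.range (L.comp (.inl ℝ ℝ ℝ) : ℝ →ₗ[ℝ] (Fin 3 → ℝ)) := by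
  intro v hv
  refine ⟨v 0, ?_⟩
  rw [mem_axis] at hv
  funext i
  fin_cases i <;> simp [coe_L, F, hv.1, hv.2]

theorem fderivWithin_F (p : ℝ × ℝ) : fderivWithin ℝ F univ p = L := by
  rw [fderivWithin_univ, ← coe_L, L.fderiv]

theorem fderivWithin_slice (a x : ℝ) :
    fderivWithin ℝ (fun x => F (x, a)) univ x = L.comp (.inl ℝ ℝ ℝ) := by
  rw [fderivWithin_univ, ← coe_L]
  exact (L.hasFDerivAt.comp x (hasFDerivAt_prodMk_left x a)).fderiv

theorem F_mem_Z_iff (p : ℝ × ℝ) :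
    F p ∈ Z ↔ p ∈ Ioo (0 : ℝ) 1 ×ˢ ({0} : Set ℝ) := by
  simp [F, Z, and_assoc]

theorem delta_F (p : ℝ × ℝ) :
    delta F univ p Z = if p ∈ Ioo (0 : ℝ) 1 ×ˢ ({0} : Set ℝ) then 1 else 0 := by
  split_ifs with hp
  · have hZ := (F_mem_Z_iff p).2 hp
    rw [delta_eq_finrank_sub_of_injective hZ (by rw [fderivWithin_F]; exact L_injective)]
    · simp
    · rw [fderivWithin_F, tangentAt_Z hZ]
      exact axis_le_range.trans (LinearMap.range_comp_le_range _ _)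
  · exact delta_eq_zero_of_notMem (mt (F_mem_Z_iff p).1 hp)

theorem delta_slice (p : ℝ × ℝ) :
    delta (fun x => F (x, p.2)) univ p.1 Z =
      if p ∈ Ioo (0 : ℝ) 1 ×ˢ ({0} : Set ℝ) then 2 else 0 := by
  split_ifs with hp
  · have hZ := (F_mem_Z_iff p).2 hp
    rw [delta_eq_finrank_sub_of_injective (f := fun x => F (x, p.2)) hZ
      (by rw [fderivWithin_slice]; exact L_injective.comp LinearMap.inl_injective)]
    · simp
    · rw [fderivWithin_slice, tangentAt_Z hZ]
      exact axis_le_range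
  · exact delta_eq_zero_of_notMem (mt (F_mem_Z_iff p).1 hp)

theorem deltaSup_F : deltaSup F univ Z = 1 := by
  refine IsGreatest.csSup_eq ⟨⟨(1 / 2, 0), trivial, ?_⟩, ?_⟩
  · rw [delta_F, if_pos (by norm_num)]
  · rintro n ⟨p, -, rfl⟩
    rw [delta_F]
    split_ifs <;> simp

end BruceKirk

/-- The Bruce–Kirk counterexample: F(x,a) = (x,a,0), Z the open unit segment of the first
axis in ℝ³. The two defects, the emptiness of W(F,Z), and the non-closedness of Σ. -/
theorem stmt8 :
    let F : ℝ × ℝ → (Fin 3 → ℝ) := fun p => ![p.1, p.2, 0]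
    let Z : Set (Fin 3 → ℝ) := {y | 0 < y 0 ∧ y 0 < 1 ∧ y 1 = 0 ∧ y 2 = 0}
    (∀ p : ℝ × ℝ, p ∈ Set.Ioo (0 : ℝ) 1 ×ˢ ({0} : Set ℝ) →
        delta F Set.univ p Z = 1 ∧
        delta (fun x : ℝ => F (x, p.2)) Set.univ p.1 Z = 2) ∧
    (∀ p : ℝ × ℝ, p ∉ Set.Ioo (0 : ℝ) 1 ×ˢ ({0} : Set ℝ) →
        delta F Set.univ p Z = 0 ∧
        delta (fun x : ℝ => F (x, p.2)) Set.univ p.1 Z = 0) ∧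
    {p : ℝ × ℝ | delta (fun x : ℝ => F (x, p.2)) Set.univ p.1 Z =
        delta F Set.univ p Z ∧ 0 < delta F Set.univ p Z} = ∅ ∧
    (∀ p : ℝ × ℝ, delta (fun x : ℝ => F (x, p.2)) Set.univ p.1 Z = 0 ∨
        delta F Set.univ p Z < delta (fun x : ℝ => F (x, p.2)) Set.univ p.1 Z) ∧
    deltaSup F Set.univ Z = 1 ∧
    {p : ℝ × ℝ | delta F Set.univ p Z = deltaSup F Set.univ Z} =
      Set.Ioo (0 : ℝ) 1 ×ˢ ({0} : Set ℝ) ∧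
    ¬ IsClosed {p : ℝ × ℝ | delta F Set.univ p Z = deltaSup F Set.univ Z} := by
  intro F Z
  have hF : ∀ p, delta F univ p Z = if p ∈ Ioo (0 : ℝ) 1 ×ˢ ({0} : Set ℝ) then 1 else 0 :=
    BruceKirk.delta_F
  have hslice : ∀ p : ℝ × ℝ, delta (fun x => F (x, p.2)) univ p.1 Z =
      if p ∈ Ioo (0 : ℝ) 1 ×ˢ ({0} : Set ℝ) then 2 else 0 :=
    BruceKirk.delta_slice
  have hsup : deltaSup F univ Z = 1 := BruceKirk.deltaSup_F
  have hSigma : {p : ℝ × ℝ | delta F univ p Z = deltaSup F univ Z} =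
      Ioo (0 : ℝ) 1 ×ˢ ({0} : Set ℝ) := by
    ext p
    simp only [mem_ofPred_eq, hF, hsup]
    split_ifs with hp <;> simp [hp]
  refine ⟨fun p hp => by simp [hF, hslice, hp], fun p hp => by simp [hF, hslice, hp], ?_,
    fun p => ?_, hsup, hSigma, ?_⟩
  · ext p
    simp only [mem_ofPred_eq, mem_empty_iff_false, iff_false, hF, hslice]
    split_ifs <;> simp
  · rw [hF, hslice]
    split_ifs <;> simp
  · rw [hSigma]
    exact not_isClosed_Ioo_prod zero_lt_one (singleton_nonempty 0)
end
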